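/- Let 𝒞 ⊆ ℝ^{n+m} be a proper C-set and let A ∈ ℝ^{n×n}, B ∈ ℝ^{n×m}. Let ℒ ⊆ ℝⁿ be a proper C-set verifying the control Lyapunov decrease condition (for every x ∈ ℝⁿ there exists u ∈ ℝᵐ with γ(ℒ, Ax+Bu) + γ(𝒞, (x,u)) ≤ γ(ℒ, x)), and let 𝒟⁺ = P_x𝒞. Let S ⊆ ℝⁿ be a C-set with S ⊆ ℒ*, and let (𝒫_k)_{k≥1} be the iterates 𝒫₁ = P_x(𝒞* ⊕ MᵀS)*, 𝒫_{k+1} = P_x(𝒞* ⊕ Mᵀ𝒫_k*)* for k ≥ 1. Then for every k ≥ 1, ℒ ⊆ 𝒫_k ⊆ 𝒟⁺. -/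

import Mathlib

open Pointwise Filter Topology Matrix

noncomputable section

/-- ℝⁿ with the standard (Euclidean) inner product. -/
abbrev Rsp (n : ℕ) := EuclideanSpace ℝ (Fin n)

/-- ℝ^{n+m} realized as the L²-product ℝⁿ × ℝᵐ. -/
abbrev Rsp2 (n m : ℕ) := WithLp 2 (Rsp n × Rsp m)

/-- A C-set: compact, convex, containing the origin. -/
def IsCSet {E : Type*} [NormedAddCommGroup E] [NormedSpace ℝ E] (X : Set E) : Prop :=
  IsCompact X ∧ Convex ℝ X ∧ (0 : E) ∈ X

/-- A proper C-set: a C-set containing the origin in its interior. -/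
def IsProperCSet {E : Type*} [NormedAddCommGroup E] [NormedSpace ℝ E] (X : Set E) : Prop :=
  IsCSet X ∧ (0 : E) ∈ interior X

/-- The polar set 𝒳* = {y : ⟨y,x⟩ ≤ 1 for all x ∈ 𝒳}. -/
def polarSet {E : Type*} [NormedAddCommGroup E] [InnerProductSpace ℝ E] (X : Set E) : Set E :=
  {y | ∀ x ∈ X, inner ℝ y x ≤ (1 : ℝ)}

/-- The Minkowski (gauge) function γ(𝒳,y) = inf{η ≥ 0 : y ∈ η𝒳}. -/
def mgauge {E : Type*} [NormedAddCommGroup E] [NormedSpace ℝ E] (X : Set E) (y : E) : ℝ :=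
  sInf {η : ℝ | 0 ≤ η ∧ y ∈ η • X}

variable {n m : ℕ}

/-- The map M = (A B) : ℝ^{n+m} → ℝⁿ, M(x,u) = Ax + Bu. -/
def Mfwd (A : Matrix (Fin n) (Fin n) ℝ) (B : Matrix (Fin n) (Fin m) ℝ) (w : Rsp2 n m) : Rsp n :=
  Matrix.toEuclideanLin A w.ofLp.1 + Matrix.toEuclideanLin B w.ofLp.2

/-- The transpose map Mᵀ : ℝⁿ → ℝ^{n+m}, Mᵀp = (Aᵀp, Bᵀp). -/
def Mtr (A : Matrix (Fin n) (Fin n) ℝ) (B : Matrix (Fin n) (Fin m) ℝ) (p : Rsp n) : Rsp2 n m :=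
  WithLp.toLp 2 (Matrix.toEuclideanLin Aᵀ p, Matrix.toEuclideanLin Bᵀ p)

/-- The projection P_x : ℝ^{n+m} → ℝⁿ, (x,u) ↦ x. -/
def Pxproj : Rsp2 n m → Rsp n := fun w => w.ofLp.1

/-!
For `x ∈ ℒ` we have `γ(ℒ, x) ≤ 1`, so the control `u` of the decrease condition gives
`γ(ℒ, Ax + Bu) + γ(𝒞, (x, u)) ≤ 1`. Since `⟨c, w⟩ ≤ γ(𝒞, w)` for `c ∈ 𝒞*` and
`⟨(x, u), Mᵀs⟩ = ⟨Ax + Bu, s⟩ ≤ γ(ℒ, Ax + Bu)` for `s ∈ ℒ*`, the point `(x, u)` lies in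
`(𝒞* ⊕ MᵀT)*` whenever `T ⊆ ℒ*`; hence `ℒ ⊆ P_x(𝒞* ⊕ MᵀT)*`. If moreover `0 ∈ T`, then
`(𝒞* ⊕ MᵀT)* ⊆ 𝒞** = 𝒞`, giving the outer bound. Both hypotheses on `T` propagate along the
recursion, because `ℒ ⊆ 𝒫_k` implies `𝒫_k* ⊆ ℒ*`.
-/

section Polar

variable {E : Type*} [NormedAddCommGroup E] [InnerProductSpace ℝ E]

lemma zero_mem_polarSet (X : Set E) : (0 : E) ∈ polarSet X := by
  simp [polarSet]

lemma polarSet_anti {X Y : Set E} (h : X ⊆ Y) : polarSet Y ⊆ polarSet X :=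
  fun _ hp x hx => hp x (h hx)

lemma mgauge_le_one_of_mem {X : Set E} {x : E} (hx : x ∈ X) : mgauge X x ≤ 1 :=
  csInf_le ⟨0, fun _ hr => hr.1⟩ ⟨zero_le_one, by rwa [one_smul]⟩

lemma inner_le_mgauge_of_mem_polarSet {X : Set E} (hX : Absorbent ℝ X) {c : E}
    (hc : c ∈ polarSet X) (w : E) : inner ℝ c w ≤ mgauge X w := by
  obtain ⟨r, hr, hrw⟩ := hX.gauge_set_nonempty (x := w)
  refine le_csInf ⟨r, hr.le, hrw⟩ ?_
  rintro η ⟨hη, a, ha, rfl⟩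
  rw [real_inner_smul_right]
  simpa using mul_le_mul_of_nonneg_left (hc a ha) hη

/-- Separation (Hahn–Banach with the Riesz representation) gives the bipolar inclusion. -/
lemma polarSet_polarSet_subset [CompleteSpace E] {C : Set E} (hconv : Convex ℝ C)
    (hcl : IsClosed C) (h0 : (0 : E) ∈ C) : polarSet (polarSet C) ⊆ C := by
  intro w hw
  by_contra hwC
  obtain ⟨f, u, hfC, hfw⟩ := geometric_hahn_banach_closed_point hconv hcl hwC
  have hu : 0 < u := by simpa using hfC 0 h0
  set y := (InnerProductSpace.toDual ℝ E).symm f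
  have hy : ∀ z : E, inner ℝ y z = f z := fun _ => InnerProductSpace.toDual_symm_apply
  have hmem : u⁻¹ • y ∈ polarSet C := by
    intro x hx
    rw [real_inner_smul_left, hy, inv_mul_le_iff₀ hu, mul_one]
    exact (hfC x hx).le
  have hle := hw _ hmem
  rw [real_inner_smul_right, real_inner_comm, hy, inv_mul_le_iff₀ hu, mul_one] at hle
  linarith

lemma polarSet_polarSet_add_subset [CompleteSpace E] {C D : Set E} (hconv : Convex ℝ C)
    (hcl : IsClosed C) (hC0 : (0 : E) ∈ C) (hD0 : (0 : E) ∈ D) :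
    polarSet (polarSet C + D) ⊆ C := by
  refine (polarSet_anti fun c hc => ?_).trans (polarSet_polarSet_subset hconv hcl hC0)
  simpa using Set.add_mem_add hc hD0

lemma mem_polarSet_add_image_of_mgauge_add_le_one {F : Type*} [NormedAddCommGroup F]
    [InnerProductSpace ℝ F] {C : Set E} {L T : Set F} {f : E → F} {g : F → E}
    (hfg : ∀ w p, inner ℝ w (g p) = inner ℝ (f w) p) (hC : Absorbent ℝ C)
    (hL : Absorbent ℝ L) (hTL : T ⊆ polarSet L) {w : E}
    (hw : mgauge L (f w) + mgauge C w ≤ 1) : w ∈ polarSet (polarSet C + g '' T) := by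
  rintro _ ⟨c, hc, _, ⟨s, hs, rfl⟩, rfl⟩
  have hCw := inner_le_mgauge_of_mem_polarSet hC hc w
  have hLw := inner_le_mgauge_of_mem_polarSet hL (hTL hs) (f w)
  rw [real_inner_comm] at hCw hLw
  rw [inner_add_right, hfg]
  linarith

end Polar

lemma IsProperCSet.absorbent {E : Type*} [NormedAddCommGroup E] [NormedSpace ℝ E] {X : Set E}
    (hX : IsProperCSet X) : Absorbent ℝ X :=
  absorbent_nhds_zero (mem_interior_iff_mem_nhds.mp hX.2)

lemma inner_Mtr (A : Matrix (Fin n) (Fin n) ℝ) (B : Matrix (Fin n) (Fin m) ℝ)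
    (w : Rsp2 n m) (p : Rsp n) : inner ℝ w (Mtr A B p) = inner ℝ (Mfwd A B w) p := by
  have transpose_inner {k : ℕ} (K : Matrix (Fin n) (Fin k) ℝ) (x : Rsp k) :
      inner ℝ x (Kᵀ.toEuclideanLin p) = inner ℝ (K.toEuclideanLin x) p := by
    rw [← conjTranspose_eq_transpose_of_trivial, toEuclideanLin_conjTranspose_eq_adjoint,
      LinearMap.adjoint_inner_right]
  rw [WithLp.prod_inner_apply, Mtr, Mfwd, inner_add_left, transpose_inner, transpose_inner]

def dualStep (A : Matrix (Fin n) (Fin n) ℝ) (B : Matrix (Fin n) (Fin m) ℝ)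
    (C : Set (Rsp2 n m)) (T : Set (Rsp n)) : Set (Rsp n) :=
  Pxproj '' polarSet (polarSet C + Mtr A B '' T)

lemma subset_dualStep {C : Set (Rsp2 n m)} (hC : Absorbent ℝ C)
    {A : Matrix (Fin n) (Fin n) ℝ} {B : Matrix (Fin n) (Fin m) ℝ}
    {L : Set (Rsp n)} (hL : Absorbent ℝ L)
    (hLyap : ∀ x : Rsp n, ∃ u : Rsp m,
      mgauge L (Mfwd A B (WithLp.toLp 2 (x, u))) + mgauge C (WithLp.toLp 2 (x, u) : Rsp2 n m)
        ≤ mgauge L x)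
    {T : Set (Rsp n)} (hTL : T ⊆ polarSet L) : L ⊆ dualStep A B C T := by
  intro x hx
  obtain ⟨u, hu⟩ := hLyap x
  refine ⟨WithLp.toLp 2 (x, u), ?_, rfl⟩
  exact mem_polarSet_add_image_of_mgauge_add_le_one (inner_Mtr A B) hC hL hTL
    (hu.trans (mgauge_le_one_of_mem hx))

lemma dualStep_subset (A : Matrix (Fin n) (Fin n) ℝ) (B : Matrix (Fin n) (Fin m) ℝ)
    {C : Set (Rsp2 n m)} (hC : IsCSet C) {T : Set (Rsp n)} (hT0 : (0 : Rsp n) ∈ T) :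
    dualStep A B C T ⊆ Pxproj '' C := by
  have hMtr0 : Mtr A B 0 = 0 := by simp [Mtr]
  exact Set.image_mono <| polarSet_polarSet_add_subset hC.2.1 hC.1.isClosed hC.2.2
    ⟨0, hT0, hMtr0⟩

/-- the iterates are inner bounded by ℒ and outer bounded by 𝒟⁺ = P_x𝒞. -/
theorem stmt_13 (n m : ℕ) (C : Set (Rsp2 n m)) (hC : IsProperCSet C)
    (A : Matrix (Fin n) (Fin n) ℝ) (B : Matrix (Fin n) (Fin m) ℝ)
    (L : Set (Rsp n)) (hL : IsProperCSet L)
    (hLyap : ∀ x : Rsp n, ∃ u : Rsp m,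
      mgauge L (Mfwd A B (WithLp.toLp 2 (x, u))) + mgauge C (WithLp.toLp 2 (x, u) : Rsp2 n m) ≤ mgauge L x)
    (Dplus : Set (Rsp n)) (hD : Dplus = Pxproj '' C)
    (S : Set (Rsp n)) (hS : IsCSet S) (hSL : S ⊆ polarSet L)
    (P : ℕ → Set (Rsp n))
    (hP0 : P 0 = Pxproj '' polarSet (polarSet C + Mtr A B '' S))
    (hPs : ∀ k : ℕ, P (k + 1) = Pxproj '' polarSet (polarSet C + Mtr A B '' polarSet (P k))) :
    ∀ k : ℕ, L ⊆ P k ∧ P k ⊆ Dplus := by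
  subst hD
  have bounds {T : Set (Rsp n)} (hT0 : (0 : Rsp n) ∈ T) (hTL : T ⊆ polarSet L) :
      L ⊆ dualStep A B C T ∧ dualStep A B C T ⊆ Pxproj '' C :=
    ⟨subset_dualStep hC.absorbent hL.absorbent hLyap hTL, dualStep_subset A B hC.1 hT0⟩
  intro k
  induction k with
  | zero => exact hP0 ▸ bounds hS.2.2 hSL
  | succ k ih => exact hPs k ▸ bounds (zero_mem_polarSet (P k)) (polarSet_anti ih.1)
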